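/- Every eigenvalue λ of the truncated Fourier operator F_{[-a,a]} corresponding to an even eigenfunction is real and lies in [−1,1], and every eigenvalue corresponding to an odd eigenfunction is purely imaginary and lies in [−i,i]; consequently every eigenvalue lies in the cross [−1,1] ∪ [−i,i] ⊂ ℂ. -/

import Mathlib

open Complex MeasureTheory intervalIntegral

/-- The truncated Fourier operator `F_{[-a,a]}`. -/
noncomputable def truncFourier (a : ℝ) (x : ℝ → ℂ) : ℝ → ℂ :=
  fun t => (1 / Real.sqrt (2 * Real.pi)) *
    ∫ τ in (-a)..a, Complex.exp (Complex.I * t * τ) * x τ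

/-!
If `x(-t) = e · x(t)` with `e` real, the symmetry `e^{itτ} = e^{iτt}` of the kernel turns the
pairing of the eigen-equation `F x = λ x` with `x` into `λ ‖x‖² = e · conj λ ‖x‖²`: so `λ` is real
for even and purely imaginary for odd eigenfunctions. A general eigenfunction splits into its even
and odd parts, which are again eigenfunctions for `λ`, and one of them does not vanish.

The bound `‖λ‖ ≤ 1` is `‖F_{[-a,a]}‖ ≤ 1`. Parseval on the circle `ℝ / 2aℤ` shows that the values
of `F x` on every lattice `s + (π / a) ℤ` have square sum `(a / π) ‖x‖²`; integrating this over
`s` in one period `[-a, -a + π / a]` bounds the integral of `|F x|²` over an interval containing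
`[-a, a]` by `‖x‖²`.
-/

open Set ComplexConjugate
open scoped Real

theorem intervalIntegral_conj {a b : ℝ} (f : ℝ → ℂ) :
    ∫ t in a..b, conj (f t) = conj (∫ t in a..b, f t) := by
  simp only [intervalIntegral, integral_conj, map_sub]

theorem intervalIntegral_conj_mul_eq_of_eqOn_mul {a b : ℝ} (hab : a ≤ b) {x f : ℝ → ℂ} {c : ℂ}
    (hf : ∀ t ∈ Icc a b, f t = c * x t) :
    ∫ t in a..b, conj (x t) * f t = c * ∫ t in a..b, ‖x t‖ ^ 2 := by
  rw [← intervalIntegral.integral_ofReal, ← intervalIntegral.integral_const_mul]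
  refine intervalIntegral.integral_congr fun t ht => ?_
  rw [uIcc_of_le hab] at ht
  simp only [hf t ht, mul_left_comm _ c, conj_mul', ofReal_pow]

theorem intervalIntegral_sq_norm_pos {a b : ℝ} (hab : a < b) {x : ℝ → ℂ} (hx : Continuous x)
    (hx0 : ∃ t ∈ Icc a b, x t ≠ 0) : 0 < ∫ t in a..b, ‖x t‖ ^ 2 := by
  obtain ⟨t, ht, hxt⟩ := hx0
  exact intervalIntegral.integral_pos hab (by fun_prop) (fun _ _ => by positivity)
    ⟨t, ht, by positivity⟩

theorem intervalIntegral_le_mul_of_sum_shift_le {G : ℝ → ℝ} (hG : Continuous G) (c : ℝ)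
    {h B : ℝ} (hh : 0 ≤ h) (M : ℕ) (hB : ∀ s, ∑ k ∈ Finset.range M, G (s + k * h) ≤ B) :
    ∫ t in c..c + M * h, G t ≤ h * B := by
  calc ∫ t in c..c + M * h, G t
      = ∑ k ∈ Finset.range M, ∫ t in (c + k * h)..(c + (k + 1 : ℕ) * h), G t := by
        rw [intervalIntegral.sum_integral_adjacent_intervals
          (fun k _ => hG.intervalIntegrable _ _)]
        simp
    _ = ∫ s in c..c + h, ∑ k ∈ Finset.range M, G (s + k * h) := by
        rw [intervalIntegral.integral_finsetSum fun (k : ℕ) _ =>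
          (by fun_prop : Continuous fun s => G (s + k * h)).intervalIntegrable _ _]
        refine Finset.sum_congr rfl fun k _ => ?_
        rw [intervalIntegral.integral_comp_add_right]
        push_cast
        ring_nf
    _ ≤ ∫ _ in c..c + h, B :=
        intervalIntegral.integral_mono_on (by linarith)
          ((by fun_prop : Continuous _).intervalIntegrable _ _) intervalIntegrable_const
          fun s _ => hB s
    _ = h * B := by simp

namespace truncFourier

variable {a : ℝ} {x y : ℝ → ℂ} {lam : ℂ}

theorem comp_neg (x : ℝ → ℂ) (t : ℝ) :
    truncFourier a (fun τ => x (-τ)) t = truncFourier a x (-t) := by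
  simp only [truncFourier]
  congr 1
  rw [← neg_neg a, ← intervalIntegral.integral_comp_neg, neg_neg]
  push_cast
  ring_nf

theorem const_mul (c : ℂ) (x : ℝ → ℂ) (t : ℝ) :
    truncFourier a (fun τ => c * x τ) t = c * truncFourier a x t := by
  simp only [truncFourier, mul_left_comm _ c, intervalIntegral.integral_const_mul]

theorem add (hx : IntervalIntegrable x volume (-a) a) (hy : IntervalIntegrable y volume (-a) a)
    (t : ℝ) : truncFourier a (fun τ => x τ + y τ) t = truncFourier a x t + truncFourier a y t := by
  have hcont : ContinuousOn (fun τ : ℝ => exp (I * t * τ)) (uIcc (-a) a) := by fun_prop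
  simp only [truncFourier, mul_add,
    intervalIntegral.integral_add (hx.continuousOn_mul hcont) (hy.continuousOn_mul hcont)]

theorem continuous (hx : Continuous x) : Continuous (truncFourier a x) :=
  continuous_const.mul <|
    intervalIntegral.continuous_parametric_intervalIntegral_of_continuous' (by fun_prop) _ _

theorem conj_apply_neg (y : ℝ → ℂ) (τ : ℝ) :
    conj (truncFourier a y (-τ)) =
      (1 / √(2 * π)) * ∫ t in (-a)..a, exp (I * t * τ) * conj (y t) := by
  simp only [truncFourier, map_mul, map_div₀, map_one, conj_ofReal, ← intervalIntegral_conj,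
    ← exp_conj, conj_I, ofReal_neg, map_neg]
  ring_nf

theorem integral_conj_mul (hx : Continuous x) (hy : Continuous y) :
    ∫ t in (-a)..a, conj (y t) * truncFourier a x t =
      ∫ τ in (-a)..a, conj (truncFourier a y (-τ)) * x τ := by
  have hK : Continuous (Function.uncurry fun t τ : ℝ => conj (y t) * exp (I * t * τ) * x τ) :=
    by fun_prop
  calc ∫ t in (-a)..a, conj (y t) * truncFourier a x t
      = (1 / √(2 * π)) * ∫ t in (-a)..a, ∫ τ in (-a)..a, conj (y t) * exp (I * t * τ) * x τ := by
        simp only [truncFourier, ← intervalIntegral.integral_const_mul]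
        congr 1; ext t; congr 1; ext τ; ring
    _ = (1 / √(2 * π)) * ∫ τ in (-a)..a, ∫ t in (-a)..a, conj (y t) * exp (I * t * τ) * x τ := by
        rw [intervalIntegral_intervalIntegral_swap ((hK.continuousOn.integrableOn_compact
          (isCompact_uIcc.prod isCompact_uIcc)).mono_set
          (prod_mono uIoc_subset_uIcc uIoc_subset_uIcc))]
    _ = ∫ τ in (-a)..a, conj (truncFourier a y (-τ)) * x τ := by
        simp only [conj_apply_neg, ← intervalIntegral.integral_mul_const,
          ← intervalIntegral.integral_const_mul]
        congr 1; ext τ; congr 1; ext t; ring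

theorem eigenvalue_eq_mul_conj_of_parity (ha : 0 < a) (hx : Continuous x)
    (hx0 : ∃ t ∈ Icc (-a) a, x t ≠ 0)
    (heig : ∀ t ∈ Icc (-a) a, truncFourier a x t = lam * x t)
    {e : ℝ} (hpar : ∀ t, x (-t) = e * x t) : lam = e * conj lam := by
  set N := ∫ t in (-a)..a, ‖x t‖ ^ 2
  have hN : 0 < N := intervalIntegral_sq_norm_pos (by linarith) hx hx0
  have hS := intervalIntegral_conj_mul_eq_of_eqOn_mul (by linarith) heig
  have hS' : ∫ τ in (-a)..a, conj (truncFourier a x τ) * x τ = conj lam * N := by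
    rw [← conj_ofReal, ← map_mul, ← hS, ← intervalIntegral_conj]
    simp only [map_mul, conj_conj, mul_comm]
  have hF : ∀ τ, truncFourier a x (-τ) = e * truncFourier a x τ := fun τ => by
    rw [← comp_neg, funext hpar, const_mul]
  have hadj := integral_conj_mul (a := a) hx hx
  simp only [hF, map_mul, conj_ofReal, mul_assoc, intervalIntegral.integral_const_mul] at hadj
  rw [hS, hS'] at hadj
  exact mul_right_cancel₀ (ofReal_ne_zero.2 hN.ne') (hadj.trans (mul_assoc _ _ _).symm)

theorem im_eq_zero_of_even (ha : 0 < a) (hx : Continuous x)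
    (hx0 : ∃ t ∈ Icc (-a) a, x t ≠ 0)
    (heig : ∀ t ∈ Icc (-a) a, truncFourier a x t = lam * x t) (heven : ∀ t, x (-t) = x t) :
    lam.im = 0 := by
  have h := eigenvalue_eq_mul_conj_of_parity ha hx hx0 heig (e := 1) (by simpa using heven)
  rw [ofReal_one, one_mul] at h
  exact conj_eq_iff_im.1 h.symm

theorem re_eq_zero_of_odd (ha : 0 < a) (hx : Continuous x)
    (hx0 : ∃ t ∈ Icc (-a) a, x t ≠ 0)
    (heig : ∀ t ∈ Icc (-a) a, truncFourier a x t = lam * x t) (hodd : ∀ t, x (-t) = -x t) :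
    lam.re = 0 := by
  have h := congrArg re <|
    eigenvalue_eq_mul_conj_of_parity ha hx hx0 heig (e := -1) (by simpa using hodd)
  simp only [ofReal_neg, ofReal_one, neg_mul, one_mul, neg_re, conj_re] at h
  linarith

theorem eigen_add_mul_comp_neg (hx : Continuous x)
    (heig : ∀ t ∈ Icc (-a) a, truncFourier a x t = lam * x t) (c : ℂ) :
    ∀ t ∈ Icc (-a) a, truncFourier a (fun τ => x τ + c * x (-τ)) t = lam * (x t + c * x (-t)) := by
  intro t ht
  have hx' : Continuous fun τ => c * x (-τ) := by fun_prop
  rw [add (hx.intervalIntegrable _ _) (hx'.intervalIntegrable _ _), const_mul, comp_neg,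
    heig t ht, heig (-t) ⟨by linarith [ht.2], by linarith [ht.1]⟩]
  ring

theorem hasSum_sq_norm_lattice (ha : 0 < a) (hx : MemLp x 2 (volume.restrict (Ioc (-a) a)))
    (s : ℝ) :
    HasSum (fun n : ℤ => ‖truncFourier a x (s + n * (π / a))‖ ^ 2)
      (a / π * ∫ τ in (-a)..a, ‖x τ‖ ^ 2) := by
  have hlt : -a < a := by linarith
  set g : ℝ → ℂ := fun τ => exp (I * s * τ) * x τ
  have hgx : ∀ τ, ‖g τ‖ = ‖x τ‖ := fun τ => by simp [g, norm_exp]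
  have hg : MemLp g 2 (volume.restrict (Ioc (-a) a)) :=
    hx.of_le ((by fun_prop : Continuous _).aestronglyMeasurable.mul hx.1)
      (ae_of_all _ fun τ => (hgx τ).le)
  -- the samples of `F x` on `s + (π / a) ℤ` are the Fourier coefficients of `g` on `[-a, a]`
  have hcoeff : ∀ n : ℤ, truncFourier a x (s + n * (π / a)) =
      (2 * a / √(2 * π)) * fourierCoeffOn hlt g (-n) := fun n => by
    have hk : ∀ τ : ℝ, exp (I * ↑(s + n * (π / a)) * τ) * x τ =
        fourier (-(-n)) (τ : AddCircle (a - -a)) • g τ := fun τ => by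
      rw [fourier_coe_apply, smul_eq_mul, ← mul_assoc, ← Complex.exp_add]
      congr 2
      push_cast
      field_simp
      ring
    rw [fourierCoeffOn_eq_integral, truncFourier, Complex.real_smul]
    simp only [hk]
    have : (a : ℂ) ≠ 0 := ofReal_ne_zero.2 ha.ne'
    push_cast
    field_simp
    ring
  have hpars := ((Equiv.neg ℤ).hasSum_iff.2 (hasSum_sq_fourierCoeffOn hlt hg)).mul_left
    (‖(2 * a / √(2 * π) : ℂ)‖ ^ 2)
  have hval : ‖(2 * a / √(2 * π) : ℂ)‖ ^ 2 * ((a - -a)⁻¹ • ∫ τ in (-a)..a, ‖g τ‖ ^ 2) =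
      a / π * ∫ τ in (-a)..a, ‖x τ‖ ^ 2 := by
    simp only [hgx, smul_eq_mul, norm_div, norm_mul, Complex.norm_real, Complex.norm_two,
      Real.norm_eq_abs, abs_of_pos ha, abs_of_pos (Real.sqrt_pos.2 (by positivity : 0 < 2 * π)),
      div_pow, mul_pow, Real.sq_sqrt (by positivity : 0 ≤ 2 * π)]
    field_simp
    ring
  simp only [hcoeff, norm_mul, mul_pow, ← hval]
  exact hpars

theorem integral_sq_norm_le (ha : 0 < a) (hx : Continuous x) :
    ∫ t in (-a)..a, ‖truncFourier a x t‖ ^ 2 ≤ ∫ τ in (-a)..a, ‖x τ‖ ^ 2 := by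
  set N := ∫ τ in (-a)..a, ‖x τ‖ ^ 2
  set h := π / a
  set M := ⌈2 * a / h⌉₊
  have hG : Continuous fun t => ‖truncFourier a x t‖ ^ 2 := (continuous hx).norm.pow 2
  have hM : 2 * a ≤ M * h := (div_le_iff₀ (by positivity)).1 (Nat.le_ceil _)
  have hx2 : MemLp x 2 (volume.restrict (Ioc (-a) a)) :=
    (memLp_two_iff_integrable_sq_norm hx.aestronglyMeasurable).2 (hx.norm.pow 2).integrableOn_Ioc
  have hB : ∀ s, ∑ k ∈ Finset.range M, ‖truncFourier a x (s + k * h)‖ ^ 2 ≤ a / π * N :=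
    fun s => by
      simpa [Finset.sum_map] using sum_le_hasSum ((Finset.range M).map Nat.castEmbedding)
        (fun _ _ => by positivity) (hasSum_sq_norm_lattice ha hx2 s)
  calc ∫ t in (-a)..a, ‖truncFourier a x t‖ ^ 2
      ≤ ∫ t in (-a)..(-a + M * h), ‖truncFourier a x t‖ ^ 2 :=
        intervalIntegral.integral_mono_interval le_rfl (by linarith) (by linarith)
          (ae_of_all _ fun _ => by positivity) (hG.intervalIntegrable _ _)
    _ ≤ h * (a / π * N) := intervalIntegral_le_mul_of_sum_shift_le hG (-a) (by positivity) M hB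
    _ = N := by simp only [h]; field_simp

theorem norm_eigenvalue_le_one (ha : 0 < a) (hx : Continuous x)
    (hx0 : ∃ t ∈ Icc (-a) a, x t ≠ 0)
    (heig : ∀ t ∈ Icc (-a) a, truncFourier a x t = lam * x t) : ‖lam‖ ≤ 1 := by
  have hN := intervalIntegral_sq_norm_pos (by linarith) hx hx0
  have hFx : ∫ t in (-a)..a, ‖truncFourier a x t‖ ^ 2 =
      ‖lam‖ ^ 2 * ∫ t in (-a)..a, ‖x t‖ ^ 2 := by
    rw [← intervalIntegral.integral_const_mul]
    refine intervalIntegral.integral_congr fun t ht => ?_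
    rw [uIcc_of_le (by linarith)] at ht
    simp only [heig t ht, norm_mul, mul_pow]
  have hle := integral_sq_norm_le ha hx
  rw [hFx, mul_le_iff_le_one_left hN] at hle
  exact (sq_le_one_iff₀ (norm_nonneg _)).1 hle

end truncFourier

/-- Eigenvalues of `F_{[-a,a]}` with even eigenfunctions are real and lie in `[−1,1]`;
eigenvalues with odd eigenfunctions are purely imaginary and lie in `[−i,i]`;
consequently every eigenvalue lies in the cross `[−1,1] ∪ [−i,i] ⊂ ℂ`. -/
theorem truncFourier_eigenvalue_cross (a : ℝ) (ha : 0 < a) (x : ℝ → ℂ) (lam : ℂ)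
    (hx : Continuous x)
    (hx0 : ∃ t ∈ Set.Icc (-a) a, x t ≠ 0)
    (heig : ∀ t ∈ Set.Icc (-a) a, truncFourier a x t = lam * x t) :
    ((∀ t, x (-t) = x t) → lam.im = 0 ∧ -1 ≤ lam.re ∧ lam.re ≤ 1) ∧
    ((∀ t, x (-t) = -x t) → lam.re = 0 ∧ -1 ≤ lam.im ∧ lam.im ≤ 1) ∧
    ((lam.im = 0 ∨ lam.re = 0) ∧ ‖lam‖ ≤ 1) := by
  have hnorm := truncFourier.norm_eigenvalue_le_one ha hx hx0 heig
  have hre := abs_le.1 ((abs_re_le_norm lam).trans hnorm)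
  have him := abs_le.1 ((abs_im_le_norm lam).trans hnorm)
  refine ⟨fun heven => ⟨truncFourier.im_eq_zero_of_even ha hx hx0 heig heven, hre⟩,
    fun hodd => ⟨truncFourier.re_eq_zero_of_odd ha hx hx0 heig hodd, him⟩, ?_, hnorm⟩
  obtain ⟨t₀, ht₀, hxt₀⟩ := hx0
  by_cases heven₀ : x t₀ + 1 * x (-t₀) = 0
  · refine .inr (truncFourier.re_eq_zero_of_odd ha (by fun_prop) ⟨t₀, ht₀, ?_⟩
      (truncFourier.eigen_add_mul_comp_neg hx heig (-1)) fun t => by simp only [neg_neg]; ring)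
    contrapose! hxt₀
    linear_combination (heven₀ + hxt₀) / 2
  · exact .inl (truncFourier.im_eq_zero_of_even ha (by fun_prop) ⟨t₀, ht₀, heven₀⟩
      (truncFourier.eigen_add_mul_comp_neg hx heig 1) fun t => by simp only [neg_neg]; ring)
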